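/- arXiv:1406.0136 — 2 statements merged into one kernel-verified Lean document; each statement's English description precedes it below -/
import Mathlib

section
/- Let β > 0 and let x_0, ..., x_{m−1} be nonnegative reals. Then the average (1/m)·Σ_{j=0}^{m−1} e^{−β·x_j} ≤ exp(−β·e^{−β(M−μ_min)}·(1/m)·x̄), where x̄ = (1/m)Σ x_j, M = max_j x_j, and μ_min = min_j x_j. (Slater-type inequality over-bounding the average of exponentials by an exponential of the scaled average.) -/
lemma aux_exp_chord (t T : ℝ) (ht : 0 ≤ t) (htT : t ≤ T) :
    Real.exp (-t) ≤ 1 - t * Real.exp (-T) := by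
  have h1 : t * Real.exp (-T) ≤ t * Real.exp (-t) :=
    mul_le_mul_of_nonneg_left (Real.exp_le_exp.mpr (by linarith)) ht
  have hprod : Real.exp (-t) * Real.exp t = 1 := by
    rw [← Real.exp_add]; simp
  have h2 : (1 + t) * Real.exp (-t) ≤ 1 := by
    nlinarith [Real.add_one_le_exp t, Real.exp_pos (-t)]
  nlinarith [Real.exp_pos (-t)]

theorem stmt_4 (m : ℕ) (hm : 1 ≤ m) (β : ℝ) (hβ : 0 < β)
    (x : Fin m → ℝ) (hx : ∀ j, 0 ≤ x j)
    (hne : (Finset.univ : Finset (Fin m)).Nonempty)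
    (xbar M μmin : ℝ)
    (hxbar : xbar = (1 / (m : ℝ)) * ∑ j, x j)
    (hM : M = Finset.univ.sup' hne x)
    (hμ : μmin = Finset.univ.inf' hne x) :
    (1 / (m : ℝ)) * ∑ j, Real.exp (-β * x j) ≤
      Real.exp (-β * Real.exp (-β * (M - μmin)) * ((1 / (m : ℝ)) * xbar)) := by
  have hm' : (0:ℝ) < m := by exact_mod_cast Nat.pos_of_ne_zero (by omega)
  have hm1 : (1:ℝ) ≤ m := by exact_mod_cast hm
  set c := Real.exp (-β * (M - μmin)) with hc
  have hc0 : 0 < c := Real.exp_pos _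
  have hlow : ∀ j, μmin ≤ x j := fun j => hμ ▸ Finset.inf'_le _ (Finset.mem_univ j)
  have hhigh : ∀ j, x j ≤ M := fun j => hM ▸ Finset.le_sup' _ (Finset.mem_univ j)
  have hμ0 : 0 ≤ μmin := by
    obtain ⟨j1, _, hj1⟩ := Finset.exists_mem_eq_inf' hne x
    rw [hμ, hj1]; exact hx j1
  have hμM : μmin ≤ M := (hlow ⟨0, by omega⟩).trans (hhigh _)
  have hc1 : c ≤ 1 := by
    rw [hc, Real.exp_le_one_iff]
    nlinarith
  set S := ∑ j, x j with hS
  have hSlow : (m:ℝ) * μmin ≤ S := by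
    rw [hS]
    calc (m:ℝ) * μmin = ∑ _j : Fin m, μmin := by
          simp [Finset.sum_const, Finset.card_univ, mul_comm]
      _ ≤ ∑ j, x j := Finset.sum_le_sum fun j _ => hlow j
  have hS0 : 0 ≤ S := Finset.sum_nonneg fun j _ => hx j
  -- per-term bound
  have key : ∀ j, Real.exp (-β * x j) ≤
      Real.exp (-β * μmin) * (1 - β * (x j - μmin) * c) := by
    intro j
    have ht : 0 ≤ β * (x j - μmin) := by nlinarith [hlow j]
    have htT : β * (x j - μmin) ≤ β * (M - μmin) := by nlinarith [hhigh j]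
    have h := aux_exp_chord (β * (x j - μmin)) (β * (M - μmin)) ht htT
    have heq : Real.exp (-β * x j) =
        Real.exp (-β * μmin) * Real.exp (-(β * (x j - μmin))) := by
      rw [← Real.exp_add]; ring_nf
    rw [heq]
    have : Real.exp (-(β * (M - μmin))) = c := by rw [hc]; ring_nf
    rw [this] at h
    exact mul_le_mul_of_nonneg_left h (Real.exp_pos _).le
  have hsum : ∑ j, Real.exp (-β * x j) ≤
      Real.exp (-β * μmin) * ((m:ℝ) - β * c * (S - m * μmin)) := by
    calc ∑ j, Real.exp (-β * x j)
        ≤ ∑ j, Real.exp (-β * μmin) * (1 - β * (x j - μmin) * c) :=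
          Finset.sum_le_sum fun j _ => key j
      _ = Real.exp (-β * μmin) * ((m:ℝ) - β * c * (S - m * μmin)) := by
          rw [← Finset.mul_sum]
          congr 1
          have : ∀ j : Fin m, 1 - β * (x j - μmin) * c
              = (1 + β * c * μmin) - (β * c) * x j := by intro j; ring
          simp_rw [this]
          rw [Finset.sum_sub_distrib, Finset.sum_const, ← Finset.mul_sum,
            Finset.card_univ, Fintype.card_fin, ← hS]
          push_cast
          ring
  have step1 : (1 / (m : ℝ)) * ∑ j, Real.exp (-β * x j) ≤
      Real.exp (-β * μmin) * (1 - β * c * (S / m - μmin)) := by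
    have := mul_le_mul_of_nonneg_left hsum (by positivity : (0:ℝ) ≤ 1 / m)
    calc (1 / (m : ℝ)) * ∑ j, Real.exp (-β * x j)
        ≤ (1 / (m : ℝ)) * (Real.exp (-β * μmin) * ((m:ℝ) - β * c * (S - m * μmin))) := this
      _ = Real.exp (-β * μmin) * (1 - β * c * (S / m - μmin)) := by
          field_simp
  have step2 : Real.exp (-β * μmin) * (1 - β * c * (S / m - μmin)) ≤
      Real.exp (-β * μmin) * Real.exp (-(β * c * (S / m - μmin))) := by
    apply mul_le_mul_of_nonneg_left _ (Real.exp_pos _).le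
    have := Real.add_one_le_exp (-(β * c * (S / m - μmin)))
    linarith
  have step3 : Real.exp (-β * μmin) * Real.exp (-(β * c * (S / m - μmin))) ≤
      Real.exp (-β * c * ((1 / (m : ℝ)) * xbar)) := by
    rw [← Real.exp_add, Real.exp_le_exp, hxbar]
    have h1 : S / m ≤ S := by
      rw [div_le_iff₀ hm']; nlinarith
    have h2 : μmin * (1 - c) ≥ 0 := by nlinarith
    have h3 : S / m / m ≤ S / m := by
      rw [div_le_iff₀ hm']
      have : 0 ≤ S / m := by positivity
      nlinarith
    have : (1 / (m:ℝ)) * ((1 / (m:ℝ)) * S) = S / m / m := by field_simp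
    rw [this]
    nlinarith [mul_le_mul_of_nonneg_left h3 (le_of_lt (mul_pos hβ hc0))]
  calc (1 / (m : ℝ)) * ∑ j, Real.exp (-β * x j)
      ≤ Real.exp (-β * μmin) * (1 - β * c * (S / m - μmin)) := step1
    _ ≤ Real.exp (-β * μmin) * Real.exp (-(β * c * (S / m - μmin))) := step2
    _ ≤ Real.exp (-β * c * ((1 / (m : ℝ)) * xbar)) := step3
end

section
/- Let 0 < ε < 1 and Δ ≥ 1 a natural number with ε > (1 − 1/(16Δ²))^(1/(2Δ)). Let r ≥ 1 and β = −(1/(2r))·log(16Δ²(1 − ε^(2Δ))). Then (1 − ε²)·e^(β(r+1))·Δ ≤ 1/16. -/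
theorem stmt_10 (ε : ℝ) (Δ r : ℕ) (hΔ : 1 ≤ Δ) (hr : 1 ≤ r)
    (hε0 : 0 < ε) (hε1 : ε < 1)
    (hthr : (1 - 1 / (16 * (Δ : ℝ) ^ 2)) ^ ((1 : ℝ) / (2 * Δ)) < ε)
    (β : ℝ)
    (hβ : β = -(1 / (2 * (r : ℝ))) * Real.log (16 * (Δ : ℝ) ^ 2 * (1 - ε ^ (2 * Δ)))) :
    (1 - ε ^ 2) * Real.exp (β * (r + 1)) * (Δ : ℝ) ≤ 1 / 16 := by
  have hD : (1:ℝ) ≤ (Δ:ℝ) := by exact_mod_cast hΔ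
  have hr1 : (1:ℝ) ≤ (r:ℝ) := by exact_mod_cast hr
  have h16 : (0:ℝ) < 16 * (Δ:ℝ)^2 := by positivity
  have hbase0 : (0:ℝ) ≤ 1 - 1/(16*(Δ:ℝ)^2) := by
    have : 1/(16*(Δ:ℝ)^2) ≤ 1 := by
      rw [div_le_one h16]; nlinarith
    linarith
  -- ε^(2Δ) > 1 - 1/(16Δ²)
  have hpow : 1 - 1/(16*(Δ:ℝ)^2) < ε ^ (2*Δ) := by
    have h1 : ((1 - 1/(16*(Δ:ℝ)^2)) ^ ((1:ℝ)/(2*Δ))) ^ (2*Δ) < ε ^ (2*Δ) := by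
      apply pow_lt_pow_left₀ hthr (Real.rpow_nonneg hbase0 _)
      omega
    have h2 : ((1 - 1/(16*(Δ:ℝ)^2)) ^ ((1:ℝ)/(2*Δ))) ^ (2*Δ)
        = 1 - 1/(16*(Δ:ℝ)^2) := by
      rw [← Real.rpow_natCast _ (2*Δ), ← Real.rpow_mul hbase0]
      have : (1:ℝ)/(2*Δ) * ((2*Δ:ℕ):ℝ) = 1 := by
        push_cast
        field_simp
      rw [this, Real.rpow_one]
    rwa [h2] at h1
  set s : ℝ := 1 - ε ^ (2*Δ) with hs
  have hεpow1 : ε ^ (2*Δ) < 1 := pow_lt_one₀ hε0.le hε1 (by omega)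
  have hs0 : 0 < s := by simp [hs]; linarith
  have hslt : s < 1/(16*(Δ:ℝ)^2) := by simp only [hs]; linarith
  set A : ℝ := 16*(Δ:ℝ)^2 * s with hA
  have hA0 : 0 < A := by positivity
  have hA1 : A < 1 := by
    rw [hA]
    calc 16*(Δ:ℝ)^2 * s < 16*(Δ:ℝ)^2 * (1/(16*(Δ:ℝ)^2)) := by
          exact mul_lt_mul_of_pos_left hslt h16
      _ = 1 := by field_simp
  -- exp(β(r+1)) = A ^ (-(r+1)/(2r))
  have hr0 : (0:ℝ) < (r:ℝ) := by linarith
  have hexp : Real.exp (β * (r+1)) = A ^ (-(((r:ℝ)+1)/(2*r))) := by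
    rw [Real.rpow_def_of_pos hA0, hβ]
    ring_nf
  -- 1 - ε² ≤ s
  have hmono : ε ^ (2*Δ) ≤ ε ^ 2 :=
    pow_le_pow_of_le_one hε0.le hε1.le (by omega)
  have h1e : 1 - ε^2 ≤ s := by simp only [hs]; linarith
  have h1e0 : 0 ≤ 1 - ε^2 := by nlinarith
  have hApos : (0:ℝ) < A ^ (-(((r:ℝ)+1)/(2*r))) := Real.rpow_pos_of_pos hA0 _
  have key : s * A ^ (-(((r:ℝ)+1)/(2*r))) * (Δ:ℝ) ≤ 1/16 := by
    have hpowA : A * A ^ (-(((r:ℝ)+1)/(2*r))) = A ^ (1 + -(((r:ℝ)+1)/(2*r))) := by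
      rw [Real.rpow_add hA0, Real.rpow_one]
    have hexpnn : 0 ≤ 1 + -(((r:ℝ)+1)/(2*r)) := by
      rw [← sub_eq_add_neg, sub_nonneg, div_le_one (by linarith)]
      linarith
    have hle1 : A ^ (1 + -(((r:ℝ)+1)/(2*r))) ≤ 1 :=
      Real.rpow_le_one hA0.le hA1.le hexpnn
    have hsA : s = A / (16*(Δ:ℝ)^2) := by
      rw [hA]; field_simp
    calc s * A ^ (-(((r:ℝ)+1)/(2*r))) * (Δ:ℝ)
        = A ^ (1 + -(((r:ℝ)+1)/(2*r))) / (16*(Δ:ℝ)) := by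
          rw [hsA, ← hpowA]; field_simp
      _ ≤ 1 / (16*(Δ:ℝ)) := by
          gcongr
      _ ≤ 1/16 := by
          apply div_le_div_of_nonneg_left (by norm_num) (by norm_num)
          linarith
  calc (1 - ε^2) * Real.exp (β * (r+1)) * (Δ:ℝ)
      ≤ s * Real.exp (β * (r+1)) * (Δ:ℝ) := by
        apply mul_le_mul_of_nonneg_right _ (by linarith)
        exact mul_le_mul_of_nonneg_right h1e (Real.exp_pos _).le
    _ = s * A ^ (-(((r:ℝ)+1)/(2*r))) * (Δ:ℝ) := by rw [hexp]
    _ ≤ 1/16 := key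
end
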